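/- Let ρ₁,…,ρₙ be density matrices, p a probability vector, σ_M = Σᵢ pᵢ ρᵢ. Then for every density matrix σ: Σᵢ pᵢ F(ρᵢ, σ) ≤ √(Σᵢ pᵢ F(ρᵢ, σ_M)) (the Average bound). -/

import Mathlib

/-!
Choose contractions `Vᵢ` with `Re Tr (√σ Vᵢ √ρᵢ) = F(ρᵢ, σ)` (from the polar decomposition of
`√ρᵢ √σ`) and put `Y = ∑ pᵢ Vᵢ √ρᵢ`. Cauchy–Schwarz for `⟪X, Y⟫ = Tr (Xᴴ Y)` and `Tr σ = 1` give
`∑ pᵢ F(ρᵢ, σ) = Re Tr (√σ Y) ≤ √(Tr (Yᴴ Y))`. Operator convexity of `X ↦ Xᴴ X` gives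
`Yᴴ Y ≤ ∑ pᵢ √ρᵢ Vᵢᴴ Vᵢ √ρᵢ ≤ σ_M`, and then
`Tr (Yᴴ Y) = ∑ pᵢ Re Tr (Vᵢ √ρᵢ Yᴴ) ≤ ∑ pᵢ ‖√ρᵢ Yᴴ‖₁ = ∑ pᵢ Tr √(√ρᵢ Yᴴ Y √ρᵢ) ≤ ∑ pᵢ F(ρᵢ, σ_M)`
by the duality between the trace norm and contractions and operator monotonicity of `√`.
-/

open Matrix BigOperators Finset ComplexOrder

variable {d n : ℕ}

open Classical in
/-- The positive semidefinite square root (zero if not PSD). -/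
noncomputable def psqrt (A : Matrix (Fin d) (Fin d) ℂ) : Matrix (Fin d) (Fin d) ℂ :=
  if h : A.PosSemidef then
    h.1.eigenvectorUnitary.1 * diagonal ((↑) ∘ Real.sqrt ∘ h.1.eigenvalues) *
      (star h.1.eigenvectorUnitary : Matrix (Fin d) (Fin d) ℂ)
  else 0

/-- Trace norm ‖A‖₁ = Tr √(A*A). -/
noncomputable def traceNorm (A : Matrix (Fin d) (Fin d) ℂ) : ℝ :=
  ((psqrt (Aᴴ * A)).trace).re

/-- Fidelity F(ρ,σ) = Tr √(σ^{1/2} ρ σ^{1/2}). -/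
noncomputable def fid (ρ σ : Matrix (Fin d) (Fin d) ℂ) : ℝ :=
  ((psqrt (psqrt σ * ρ * psqrt σ)).trace).re

/-- Density matrix: positive semidefinite with unit trace. -/
def IsDensity (ρ : Matrix (Fin d) (Fin d) ℂ) : Prop := ρ.PosSemidef ∧ ρ.trace = 1

/-- Contraction: spectral norm at most one, i.e. 1 - UᴴU ⪰ 0. -/
def IsContraction (U : Matrix (Fin d) (Fin d) ℂ) : Prop := (1 - Uᴴ * U).PosSemidef

/-- Probability vector. -/
def IsProbVec (p : Fin n → ℝ) : Prop := (∀ i, 0 ≤ p i) ∧ ∑ i, p i = 1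

open scoped MatrixOrder Matrix.Norms.L2Operator

lemma CStarAlgebra.star_mul_self_le_one_iff {A : Type*} [CStarAlgebra A] [PartialOrder A]
    [StarOrderedRing A] (u : A) : star u * u ≤ 1 ↔ u * star u ≤ 1 := by
  rw [← norm_le_one_iff_of_nonneg _ (star_mul_self_nonneg u),
    ← norm_le_one_iff_of_nonneg _ (mul_star_self_nonneg u),
    CStarRing.norm_star_mul_self, CStarRing.norm_self_mul_star]

lemma star_sum_smul_mul_sum_smul_le {A κ : Type*} [Ring A] [StarRing A] [PartialOrder A]
    [StarOrderedRing A] [Module ℝ A] [StarModule ℝ A] [SMulCommClass ℝ A A] [IsScalarTower ℝ A A]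
    [PosSMulMono ℝ A] {s : Finset κ} {p : κ → ℝ} (hp0 : ∀ i ∈ s, 0 ≤ p i)
    (hp1 : ∑ i ∈ s, p i = 1) (x : κ → A) :
    star (∑ i ∈ s, p i • x i) * (∑ i ∈ s, p i • x i) ≤ ∑ i ∈ s, p i • (star (x i) * x i) := by
  set y := ∑ i ∈ s, p i • x i
  have hy : star y = ∑ i ∈ s, p i • star (x i) := by
    simp only [y, star_sum, star_smul, star_trivial]
  have hvar : ∑ i ∈ s, p i • (star (x i - y) * (x i - y)) =
      ∑ i ∈ s, p i • (star (x i) * x i) - star y * y := by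
    have h1 : ∑ i ∈ s, p i • (star (x i) * y) = star y * y := by
      simp only [← smul_mul_assoc, ← Finset.sum_mul, hy]
    have h2 : ∑ i ∈ s, p i • (star y * x i) = star y * y := by
      simp only [← mul_smul_comm, ← Finset.mul_sum, y]
    have h3 : ∑ i ∈ s, p i • (star y * y) = star y * y := by
      rw [← Finset.sum_smul, hp1, one_smul]
    simp only [star_sub, sub_mul, mul_sub, smul_sub, Finset.sum_sub_distrib, h1, h2, h3]
    abel
  rw [← sub_nonneg, ← hvar]
  exact Finset.sum_nonneg fun i hi => smul_nonneg (hp0 i hi) (star_mul_self_nonneg _)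

namespace Matrix

variable {ι : Type*} [Fintype ι]

lemma re_trace_le_re_trace {A B : Matrix ι ι ℂ} (h : A ≤ B) : A.trace.re ≤ B.trace.re := by
  have h0 := (le_iff.mp h).trace_nonneg
  rw [trace_sub, sub_nonneg] at h0
  exact (Complex.le_def.mp h0).1

lemma re_trace_conjTranspose_mul_le (X Y : Matrix ι ι ℂ) :
    (Xᴴ * Y).trace.re ≤ √(Xᴴ * X).trace.re * √(Yᴴ * Y).trace.re := by
  let toL2 (X : Matrix ι ι ℂ) : EuclideanSpace ℂ (ι × ι) := WithLp.toLp 2 X.vec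
  have hinner (X Y : Matrix ι ι ℂ) : inner ℂ (toL2 X) (toL2 Y) = (Xᴴ * Y).trace := by
    rw [EuclideanSpace.inner_eq_star_dotProduct, ← star_vec_dotProduct_vec, dotProduct_comm]
  simpa only [← hinner, norm_eq_sqrt_re_inner (𝕜 := ℂ), RCLike.re_to_complex] using
    re_inner_le_norm (𝕜 := ℂ) (toL2 X) (toL2 Y)

variable [DecidableEq ι]

lemma cfc_mul_cfc (A : Matrix ι ι ℂ) (f g : ℝ → ℝ) :
    cfc f A * cfc g A = cfc (fun x => f x * g x) A :=
  (cfc_mul f g A (A.finite_real_spectrum.continuousOn f)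
    (A.finite_real_spectrum.continuousOn g)).symm

/-- `U = A |A|⁺`, where the pseudo-inverse `|A|⁺` is `x ↦ x⁻¹` applied to `|A|`; this relies on
the convention `(0 : ℝ)⁻¹ = 0`. -/
lemma exists_polar_decomposition (A : Matrix ι ι ℂ) :
    ∃ U : Matrix ι ι ℂ, Uᴴ * U ≤ 1 ∧ U * CFC.abs A = A ∧ Uᴴ * A = CFC.abs A := by
  set R := CFC.abs A
  set Rinv := cfc (·⁻¹ : ℝ → ℝ) R
  have hR : Rᴴ = R := (CFC.abs_nonneg A).isSelfAdjoint
  have hRinv : Rinvᴴ = Rinv := IsSelfAdjoint.cfc.star_eq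
  have hAA : Aᴴ * A = R * R := (CFC.abs_mul_abs A).symm
  have hRid : cfc id R = R := cfc_id ℝ R
  have hRRinvR : R * Rinv * R = R := calc
    R * Rinv * R = cfc id R * cfc (·⁻¹ : ℝ → ℝ) R * cfc id R := by rw [hRid]
    _ = cfc id R := by
      rw [cfc_mul_cfc, cfc_mul_cfc]
      exact cfc_congr fun x _ => by by_cases hx : x = 0 <;> simp [hx]
    _ = R := hRid
  have hRinvRR : Rinv * (R * R) = R := calc
    Rinv * (R * R) = cfc (·⁻¹ : ℝ → ℝ) R * (cfc id R * cfc id R) := by rw [hRid]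
    _ = cfc id R := by
      rw [cfc_mul_cfc, cfc_mul_cfc]
      exact cfc_congr fun x _ => by by_cases hx : x = 0 <;> simp [hx]
    _ = R := hRid
  refine ⟨A * Rinv, ?_, ?_, ?_⟩
  · have hRRinv : R * Rinv ≤ 1 := calc
      R * Rinv = cfc id R * cfc (·⁻¹ : ℝ → ℝ) R := by rw [hRid]
      _ ≤ 1 := by
        rw [cfc_mul_cfc]
        exact cfc_le_one _ _ fun x _ => by by_cases hx : x = 0 <;> simp [hx]
    rwa [conjTranspose_mul, hRinv, mul_assoc, ← mul_assoc Aᴴ, hAA, ← mul_assoc, hRinvRR]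
  · have hker : A * (1 - Rinv * R) = 0 := by
      rw [← conjTranspose_mul_self_eq_zero, conjTranspose_mul, conjTranspose_sub,
        conjTranspose_mul, hR, hRinv, conjTranspose_one, mul_assoc, ← mul_assoc Aᴴ, hAA]
      simp only [mul_sub, mul_one, mul_assoc, ← mul_assoc R Rinv R, hRRinvR, sub_self,
        mul_zero]
    rwa [mul_sub, mul_one, sub_eq_zero, eq_comm, ← mul_assoc] at hker
  · rw [conjTranspose_mul, hRinv, mul_assoc, hAA, hRinvRR]

end Matrix

local notation "M" => Matrix (Fin d) (Fin d) ℂ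

lemma psqrt_eq_sqrt {A : M} (hA : A.PosSemidef) : psqrt A = CFC.sqrt A := by
  rw [psqrt, dif_pos hA, CFC.sqrt_eq_real_sqrt A hA.nonneg,
    cfcₙ_eq_cfc (hf := Real.continuous_sqrt.continuousOn) (hf0 := Real.sqrt_zero), hA.1.cfc_eq]
  rfl

lemma posSemidef_psqrt (A : M) : (psqrt A).PosSemidef := by
  by_cases hA : A.PosSemidef
  · rw [psqrt_eq_sqrt hA]
    exact (CFC.sqrt_nonneg A).posSemidef
  · rw [psqrt, dif_neg hA]
    exact .zero

lemma conjTranspose_psqrt (A : M) : (psqrt A)ᴴ = psqrt A :=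
  (posSemidef_psqrt A).1

lemma psqrt_mul_psqrt {A : M} (hA : A.PosSemidef) : psqrt A * psqrt A = A := by
  rw [psqrt_eq_sqrt hA]
  exact CFC.sqrt_mul_sqrt_self A hA.nonneg

lemma re_trace_psqrt_le_of_le {A B : M} (hA : A.PosSemidef) (hAB : A ≤ B) :
    (psqrt A).trace.re ≤ (psqrt B).trace.re := by
  rw [psqrt_eq_sqrt hA, psqrt_eq_sqrt (hA.nonneg.trans hAB).posSemidef]
  exact Matrix.re_trace_le_re_trace (CFC.sqrt_le_sqrt A B hAB)

lemma traceNorm_eq_re_trace_abs (A : M) : traceNorm A = (CFC.abs A).trace.re := by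
  rw [traceNorm, psqrt_eq_sqrt (posSemidef_conjTranspose_mul_self A)]
  rfl

lemma re_trace_mul_le_traceNorm {W : M} (hW : IsContraction W) (B : M) :
    (W * B).trace.re ≤ traceNorm B := by
  obtain ⟨U, hU, hUB, -⟩ := Matrix.exists_polar_decomposition B
  set R := CFC.abs B
  set S := CFC.sqrt R
  have hR : 0 ≤ R := CFC.abs_nonneg B
  have hS : Sᴴ = S := (CFC.sqrt_nonneg R).isSelfAdjoint
  have hSS : Sᴴ * S = R := by rw [hS]; exact CFC.sqrt_mul_sqrt_self R hR
  have hWUS : (W * U * S)ᴴ * (W * U * S) ≤ R := calc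
    (W * U * S)ᴴ * (W * U * S) = Sᴴ * (Uᴴ * (Wᴴ * W) * U) * S := by
      simp only [conjTranspose_mul, mul_assoc]
    _ ≤ Sᴴ * S := by
      have hWU : Uᴴ * (Wᴴ * W) * U ≤ 1 := calc
        Uᴴ * (Wᴴ * W) * U ≤ Uᴴ * 1 * U := star_left_conjugate_le_conjugate (le_iff.mpr hW) U
        _ = Uᴴ * U := by rw [mul_one]
        _ ≤ 1 := hU
      calc Sᴴ * (Uᴴ * (Wᴴ * W) * U) * S ≤ Sᴴ * 1 * S := star_left_conjugate_le_conjugate hWU S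
        _ = Sᴴ * S := by rw [mul_one]
    _ = R := hSS
  have hrR : 0 ≤ R.trace.re := (Complex.le_def.mp hR.posSemidef.trace_nonneg).1
  calc (W * B).trace.re = (Sᴴ * (W * U * S)).trace.re := by
        rw [← hUB, ← hSS, hS, trace_mul_comm S]; simp only [mul_assoc]
    _ ≤ √(Sᴴ * S).trace.re * √((W * U * S)ᴴ * (W * U * S)).trace.re :=
        Matrix.re_trace_conjTranspose_mul_le _ _
    _ ≤ √R.trace.re * √R.trace.re := by
        rw [hSS]
        exact mul_le_mul_of_nonneg_left
          (Real.sqrt_le_sqrt (Matrix.re_trace_le_re_trace hWUS)) (Real.sqrt_nonneg _)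
    _ = traceNorm B := by rw [Real.mul_self_sqrt hrR, traceNorm_eq_re_trace_abs]

lemma traceNorm_le_traceNorm_conjTranspose (A : M) : traceNorm A ≤ traceNorm Aᴴ := by
  obtain ⟨U, hU, -, hUA⟩ := Matrix.exists_polar_decomposition A
  calc traceNorm A = (U * Aᴴ).trace.re := by
        have hadj : A * Uᴴ = (U * Aᴴ)ᴴ := by rw [conjTranspose_mul, conjTranspose_conjTranspose]
        rw [traceNorm_eq_re_trace_abs, ← hUA, trace_mul_comm, hadj, trace_conjTranspose]
        exact Complex.conj_re _
    _ ≤ traceNorm Aᴴ := re_trace_mul_le_traceNorm hU Aᴴ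

lemma traceNorm_conjTranspose (A : M) : traceNorm Aᴴ = traceNorm A :=
  le_antisymm (by simpa using traceNorm_le_traceNorm_conjTranspose Aᴴ)
    (traceNorm_le_traceNorm_conjTranspose A)

lemma traceNorm_mul_psqrt (X σ : M) : traceNorm (X * psqrt σ) = fid (Xᴴ * X) σ := by
  rw [traceNorm, fid, conjTranspose_mul, conjTranspose_psqrt]
  simp only [mul_assoc]

lemma fid_eq_traceNorm {ρ : M} (hρ : ρ.PosSemidef) (σ : M) :
    fid ρ σ = traceNorm (psqrt ρ * psqrt σ) := by
  rw [traceNorm_mul_psqrt, conjTranspose_psqrt, psqrt_mul_psqrt hρ]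

lemma fid_comm {ρ σ : M} (hρ : ρ.PosSemidef) (hσ : σ.PosSemidef) : fid ρ σ = fid σ ρ := by
  rw [fid_eq_traceNorm hρ, fid_eq_traceNorm hσ, ← traceNorm_conjTranspose, conjTranspose_mul,
    conjTranspose_psqrt, conjTranspose_psqrt]

lemma fid_le_fid_left {ρ ρ' : M} (hρ : ρ.PosSemidef) (h : ρ ≤ ρ') (σ : M) :
    fid ρ σ ≤ fid ρ' σ := by
  have hconj := star_left_conjugate_le_conjugate h (psqrt σ)
  have hpsd := hρ.conjTranspose_mul_mul_same (psqrt σ)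
  rw [star_eq_conjTranspose, conjTranspose_psqrt] at hconj
  rw [conjTranspose_psqrt] at hpsd
  exact re_trace_psqrt_le_of_le hpsd hconj

lemma exists_isContraction_re_trace_eq_fid {ρ : M} (hρ : ρ.PosSemidef) (σ : M) :
    ∃ V : M, IsContraction V ∧ (psqrt σ * (V * psqrt ρ)).trace.re = fid ρ σ := by
  obtain ⟨U, hU, -, hUA⟩ := Matrix.exists_polar_decomposition (psqrt ρ * psqrt σ)
  refine ⟨Uᴴ, ?_, ?_⟩
  · rw [IsContraction, ← le_iff, conjTranspose_conjTranspose]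
    exact (CStarAlgebra.star_mul_self_le_one_iff U).mp hU
  · rw [fid_eq_traceNorm hρ, traceNorm_eq_re_trace_abs, ← hUA, trace_mul_comm, mul_assoc]

lemma IsContraction.mul_psqrt_conjTranspose_mul_self_le {V ρ : M} (hV : IsContraction V)
    (hρ : ρ.PosSemidef) : (V * psqrt ρ)ᴴ * (V * psqrt ρ) ≤ ρ := calc
  (V * psqrt ρ)ᴴ * (V * psqrt ρ) = psqrt ρ * (Vᴴ * V) * psqrt ρ := by
      rw [conjTranspose_mul, conjTranspose_psqrt]; simp only [mul_assoc]
  _ ≤ psqrt ρ * 1 * psqrt ρ := by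
      simpa only [star_eq_conjTranspose, conjTranspose_psqrt] using
        star_left_conjugate_le_conjugate (le_iff.mpr hV) (psqrt ρ)
  _ = ρ := by rw [mul_one, psqrt_mul_psqrt hρ]

lemma re_trace_conjTranspose_mul_le_fid {ρ τ V Y : M} (hρ : ρ.PosSemidef) (hV : IsContraction V)
    (hY : Yᴴ * Y ≤ τ) : (Yᴴ * (V * psqrt ρ)).trace.re ≤ fid ρ τ := calc
  (Yᴴ * (V * psqrt ρ)).trace.re = (V * (psqrt ρ * Yᴴ)).trace.re := by
      rw [trace_mul_comm, mul_assoc]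
  _ ≤ traceNorm (psqrt ρ * Yᴴ) := re_trace_mul_le_traceNorm hV _
  _ = fid (Yᴴ * Y) ρ := by
      rw [← traceNorm_conjTranspose, conjTranspose_mul, conjTranspose_psqrt,
        conjTranspose_conjTranspose, traceNorm_mul_psqrt]
  _ ≤ fid τ ρ := fid_le_fid_left (posSemidef_conjTranspose_mul_self Y) hY ρ
  _ = fid ρ τ := fid_comm ((posSemidef_conjTranspose_mul_self Y).nonneg.trans hY).posSemidef hρ

/-- Average bound: the average fidelity of any density matrix is at most the square root of
the average fidelity of the mean state. -/
theorem average_bound (ρ : Fin n → Matrix (Fin d) (Fin d) ℂ) (p : Fin n → ℝ)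
    (hρ : ∀ i, IsDensity (ρ i)) (hp : IsProbVec p)
    (σ : Matrix (Fin d) (Fin d) ℂ) (hσ : IsDensity σ) :
    ∑ i, p i * fid (ρ i) σ ≤
      Real.sqrt (∑ i, p i * fid (ρ i) (∑ j, (p j : ℂ) • ρ j)) := by
  obtain ⟨hp0, hp1⟩ := hp
  choose V hV hVfid using fun i => exists_isContraction_re_trace_eq_fid (hρ i).1 σ
  set Y := ∑ i, p i • (V i * psqrt (ρ i))
  have hY : Yᴴ * Y ≤ ∑ j, (p j : ℂ) • ρ j := calc
    Yᴴ * Y ≤ ∑ i, p i • ((V i * psqrt (ρ i))ᴴ * (V i * psqrt (ρ i))) :=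
      star_sum_smul_mul_sum_smul_le (fun i _ => hp0 i) hp1 _
    _ ≤ ∑ i, p i • ρ i := Finset.sum_le_sum fun i _ =>
      smul_le_smul_of_nonneg_left ((hV i).mul_psqrt_conjTranspose_mul_self_le (hρ i).1) (hp0 i)
    _ = ∑ j, (p j : ℂ) • ρ j := by simp only [Complex.coe_smul]
  calc ∑ i, p i * fid (ρ i) σ = ((psqrt σ)ᴴ * Y).trace.re := by
        simp only [Y, conjTranspose_psqrt, mul_sum, trace_sum, mul_smul_comm, trace_smul,
          Complex.re_sum, Complex.smul_re, smul_eq_mul, hVfid]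
    _ ≤ √((psqrt σ)ᴴ * psqrt σ).trace.re * √(Yᴴ * Y).trace.re :=
        re_trace_conjTranspose_mul_le _ _
    _ = √(Yᴴ * Y).trace.re := by
        rw [conjTranspose_psqrt, psqrt_mul_psqrt hσ.1, hσ.2, Complex.one_re, Real.sqrt_one,
          one_mul]
    _ ≤ √(∑ i, p i * fid (ρ i) (∑ j, (p j : ℂ) • ρ j)) := by
        refine Real.sqrt_le_sqrt ?_
        calc (Yᴴ * Y).trace.re = ∑ i, p i * (Yᴴ * (V i * psqrt (ρ i))).trace.re := by
              simp only [Y, mul_sum, mul_smul_comm, trace_sum, trace_smul, Complex.re_sum,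
                Complex.smul_re, smul_eq_mul]
          _ ≤ _ := Finset.sum_le_sum fun i _ => mul_le_mul_of_nonneg_left
              (re_trace_conjTranspose_mul_le_fid (hρ i).1 (hV i) hY) (hp0 i)
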